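/- Let f : {0,1}ⁿ → F₂ be a polynomial whose degree ≤ 2 part is uniformly random. Then Pr[ngap(f)² ≥ 2^{-n-1}] ≥ 1/12. -/

import Mathlib

/-!
Write `S(β, γ) = 2ⁿ · ngap(f)`. Averaging over the uniformly random coefficients `(β, γ)` kills
every term of `S^m = ∑_{x₁,…,x_m} (-1)^{f(x₁)+⋯+f(x_m)}` except the tuples with `∑ xⱼ = 0` and
`∑ xⱼ,ₐ xⱼ,ᵦ = 0` for all `a < b`; on those the cubic part only contributes a sign.
For `m = 2` these are the pairs `x₁ = x₂`, so `E[S²] = 2ⁿ`. For `m = 4`, with `d = x₁ + x₂` and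
`e = x₁ + x₃` the conditions say `dₐ eᵦ = dᵦ eₐ`, so `d` and `e` are linearly dependent over `F₂`,
which leaves at most `3 · 4ⁿ` quadruples: `E[S⁴] ≤ 3 · 4ⁿ`. Paley–Zygmund at half the mean of
`S²` gives `Pr[S² ≥ 2ⁿ⁻¹] ≥ E[S²]² / (4 E[S⁴]) ≥ 1/12`.
-/

open Finset

lemma zmod_two_cases (a : ZMod 2) : a = 0 ∨ a = 1 := by decide +revert

def signChar : AddChar (ZMod 2) ℝ where
  toFun a := if a = 0 then 1 else -1
  map_zero_eq_one' := if_pos rfl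
  map_add_eq_mul' a b := by
    rcases zmod_two_cases a with rfl | rfl <;> rcases zmod_two_cases b with rfl | rfl <;>
      simp; decide

lemma AddChar.map_sum_eq_prod {ι A M : Type*} [AddCommMonoid A] [CommMonoid M]
    (ψ : AddChar A M) (s : Finset ι) (f : ι → A) :
    ψ (∑ i ∈ s, f i) = ∏ i ∈ s, ψ (f i) :=
  map_prod ψ.toMonoidHom (fun i => Multiplicative.ofAdd (f i)) s

lemma signChar_le_one (a : ZMod 2) : signChar a ≤ 1 := by
  rcases zmod_two_cases a with rfl | rfl <;> norm_num [signChar]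

lemma sum_signChar_mul (t : ZMod 2) :
    ∑ s : ZMod 2, signChar (s * t) = if t = 0 then 2 else 0 := by
  rcases zmod_two_cases t with rfl | rfl
  · simp [ZMod.card]
  · rw [if_neg one_ne_zero]
    simp only [mul_one, AddChar.sum_eq_zero_iff_ne_zero, AddChar.ne_zero_iff]
    exact ⟨1, by norm_num [signChar]⟩

lemma sum_signChar_dotProduct {κ : Type*} [Fintype κ] [DecidableEq κ] (v : κ → ZMod 2) :
    ∑ b : κ → ZMod 2, signChar (b ⬝ᵥ v) = if v = 0 then 2 ^ Fintype.card κ else 0 := by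
  simp only [dotProduct, AddChar.map_sum_eq_prod]
  rw [← Fintype.prod_sum fun i t => signChar (t * v i)]
  simp only [sum_signChar_mul, Fintype.prod_ite_zero, prod_const, card_univ, funext_iff,
    Pi.zero_apply]

lemma sum_signChar_add_dotProduct_add_dotProduct {ι κ : Type*} [Fintype ι] [DecidableEq ι]
    [Fintype κ] [DecidableEq κ] (a : ZMod 2) (u : κ → ZMod 2) (v : ι → ZMod 2) :
    ∑ ω : (κ → ZMod 2) × (ι → ZMod 2), signChar (a + ω.1 ⬝ᵥ u + ω.2 ⬝ᵥ v)
      = if u = 0 ∧ v = 0 then signChar a * Fintype.card ((κ → ZMod 2) × (ι → ZMod 2)) else 0 := by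
  simp only [AddChar.map_add_eq_mul, Fintype.sum_prod_type, ← mul_sum, ← sum_mul,
    sum_signChar_dotProduct]
  by_cases hu : u = 0 <;> by_cases hv : v = 0 <;> simp [hu, hv, ZMod.card, mul_assoc]

section RandomLowDegreePart

variable {ι κ : Type*} [Fintype ι] [DecidableEq ι] [Fintype κ]
  (c : (ι → ZMod 2) → ZMod 2) (φ : (ι → ZMod 2) → κ → ZMod 2)

/-- `gapSum c φ (β, γ) = 2ⁿ · ngap(f)` for `f x = c x + β ⬝ᵥ φ x + γ ⬝ᵥ x`. -/
def gapSum (ω : (κ → ZMod 2) × (ι → ZMod 2)) : ℝ :=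
  ∑ x, signChar (c x + ω.1 ⬝ᵥ φ x + ω.2 ⬝ᵥ x)

lemma gapSum_pow (m : ℕ) (ω : (κ → ZMod 2) × (ι → ZMod 2)) :
    gapSum c φ ω ^ m = ∑ x : Fin m → ι → ZMod 2,
      signChar (∑ j, c (x j) + ω.1 ⬝ᵥ ∑ j, φ (x j) + ω.2 ⬝ᵥ ∑ j, x j) := by
  simp only [gapSum, Fintype.sum_pow, ← AddChar.map_sum_eq_prod, dotProduct_sum, sum_add_distrib]

variable [DecidableEq κ]

lemma sum_gapSum_pow (m : ℕ) :
    ∑ ω, gapSum c φ ω ^ m = Fintype.card ((κ → ZMod 2) × (ι → ZMod 2)) *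
      ∑ x : Fin m → ι → ZMod 2,
        if ∑ j, φ (x j) = 0 ∧ ∑ j, x j = 0 then signChar (∑ j, c (x j)) else 0 := by
  simp only [gapSum_pow]
  rw [sum_comm, mul_sum]
  refine sum_congr rfl fun x _ => ?_
  rw [sum_signChar_add_dotProduct_add_dotProduct, mul_ite, mul_zero, mul_comm]

lemma sum_gapSum_sq :
    ∑ ω, gapSum c φ ω ^ 2
      = Fintype.card ((κ → ZMod 2) × (ι → ZMod 2)) * 2 ^ Fintype.card ι := by
  rw [sum_gapSum_pow]
  congr 1
  have hterm : ∀ x : Fin 2 → ι → ZMod 2,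
      (if ∑ j, φ (x j) = 0 ∧ ∑ j, x j = 0 then signChar (∑ j, c (x j)) else 0)
        = if x 0 = x 1 then 1 else 0 := by
    intro x
    by_cases h : x 0 = x 1
    · simp [Fin.sum_univ_two, h, funext_iff, CharTwo.add_self_eq_zero]
    · rw [if_neg h, if_neg]
      rintro ⟨-, hx⟩
      exact h (by simpa [Fin.sum_univ_two, funext_iff, CharTwo.add_eq_zero] using hx)
  simp only [hterm]
  rw [← (piFinTwoEquiv fun _ => ι → ZMod 2).symm.sum_comp, Fintype.sum_prod_type]
  simp [ZMod.card]

lemma sum_gapSum_pow_le (m : ℕ) :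
    ∑ ω, gapSum c φ ω ^ m ≤ Fintype.card ((κ → ZMod 2) × (ι → ZMod 2)) *
      #{x : Fin m → ι → ZMod 2 | ∑ j, φ (x j) = 0 ∧ ∑ j, x j = 0} := by
  rw [sum_gapSum_pow, card_filter, Nat.cast_sum]
  gcongr with x
  split_ifs <;> simp [signChar_le_one]

end RandomLowDegreePart

lemma card_filter_eq_zero_or_eq_zero_or_eq_le {X : Type*} [Fintype X] [DecidableEq X] [Zero X] :
    #{p : X × X | p.1 = 0 ∨ p.2 = 0 ∨ p.1 = p.2} ≤ 3 * Fintype.card X := by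
  calc #{p : X × X | p.1 = 0 ∨ p.2 = 0 ∨ p.1 = p.2}
      ≤ #(univ.image fun kt : Fin 3 × X => ![(0, kt.2), (kt.2, 0), (kt.2, kt.2)] kt.1) := by
        refine card_le_card fun p hp => ?_
        obtain ⟨d, e⟩ := p
        simp only [mem_filter, mem_univ, true_and] at hp
        simp only [mem_image, mem_univ, true_and, Prod.exists]
        rcases hp with rfl | rfl | rfl
        exacts [⟨0, e, rfl⟩, ⟨1, d, rfl⟩, ⟨2, d, rfl⟩]
    _ ≤ 3 * Fintype.card X := card_image_le.trans_eq (by simp)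

lemma eq_zero_or_eq_zero_or_eq_of_mul_comm {ι : Type*} {d e : ι → ZMod 2}
    (h : ∀ i j, d i * e j = d j * e i) : d = 0 ∨ e = 0 ∨ d = e := by
  by_contra! hne
  obtain ⟨i, hi⟩ := Function.ne_iff.1 hne.1
  obtain ⟨k, hk⟩ := Function.ne_iff.1 hne.2.1
  have hdi : d i = 1 := (zmod_two_cases _).resolve_left hi
  have hek : e k = 1 := (zmod_two_cases _).resolve_left hk
  have hei : e i = 1 := by
    rcases zmod_two_cases (e i) with hei | hei
    · simpa [hdi, hek, hei] using h i k
    · exact hei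
  exact hne.2.2 (funext fun j => by simpa [hdi, hei] using (h i j).symm)

lemma apply_three_eq_of_sum_eq_zero {ι : Type*} {x : Fin 4 → ι → ZMod 2} (hlin : ∑ j, x j = 0)
    (i : ι) :
    x 3 i = x 0 i + x 1 i + x 2 i := by
  have := congrFun hlin i
  simp only [Fin.sum_univ_four, Pi.add_apply, Pi.zero_apply] at this
  grind

section PairProducts

variable {ι : Type*} [LinearOrder ι]

def pairProducts (x : ι → ZMod 2) (p : {p : ι × ι // p.1 < p.2}) : ZMod 2 := x p.1.1 * x p.1.2

lemma mul_symm_of_sum_pairProducts_eq_zero {x : Fin 4 → ι → ZMod 2}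
    (hquad : ∑ j, pairProducts (x j) = 0) (hlin : ∑ j, x j = 0) (i j : ι) :
    (x 0 + x 1) i * (x 0 + x 2) j = (x 0 + x 1) j * (x 0 + x 2) i := by
  have hpair (a b : ι) (hab : a < b) :
      (x 0 + x 1) a * (x 0 + x 2) b = (x 0 + x 1) b * (x 0 + x 2) a := by
    have := congrFun hquad ⟨(a, b), hab⟩
    simp only [Fin.sum_univ_four, Pi.add_apply, Pi.zero_apply, pairProducts,
      apply_three_eq_of_sum_eq_zero hlin] at this ⊢
    grind
  rcases lt_trichotomy i j with hij | rfl | hij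
  exacts [hpair i j hij, rfl, (hpair j i hij).symm]

lemma card_filter_sum_pairProducts_eq_zero_le [Fintype ι] :
    #{x : Fin 4 → ι → ZMod 2 | ∑ j, pairProducts (x j) = 0 ∧ ∑ j, x j = 0}
      ≤ 3 * (2 ^ Fintype.card ι) ^ 2 := by
  set P : Finset ((ι → ZMod 2) × (ι → ZMod 2)) := {p | p.1 = 0 ∨ p.2 = 0 ∨ p.1 = p.2}
  have hsub :
      ({x : Fin 4 → ι → ZMod 2 | ∑ j, pairProducts (x j) = 0 ∧ ∑ j, x j = 0} : Finset _) ⊆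
        (univ ×ˢ P).image fun ade =>
          ![ade.1, ade.1 + ade.2.1, ade.1 + ade.2.2, ade.1 + ade.2.1 + ade.2.2] := by
    intro x hx
    obtain ⟨hquad, hlin⟩ := (mem_filter.1 hx).2
    refine mem_image.2 ⟨(x 0, x 0 + x 1, x 0 + x 2), ?_, ?_⟩
    · simpa [P] using eq_zero_or_eq_zero_or_eq_of_mul_comm
        (mul_symm_of_sum_pairProducts_eq_zero hquad hlin)
    · ext k i
      fin_cases k <;> simp [apply_three_eq_of_sum_eq_zero hlin] <;> grind
  calc _ ≤ _ := card_le_card hsub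
    _ ≤ #(univ ×ˢ P) := card_image_le
    _ ≤ 2 ^ Fintype.card ι * (3 * 2 ^ Fintype.card ι) := by
        rw [card_product, card_univ]
        gcongr
        · simp [ZMod.card]
        · simpa [ZMod.card] using card_filter_eq_zero_or_eq_zero_or_eq_le (X := ι → ZMod 2)
    _ = 3 * (2 ^ Fintype.card ι) ^ 2 := by ring

end PairProducts

lemma paley_zygmund_finset {ι : Type*} (s : Finset ι) (Z : ι → ℝ) {t : ℝ} (ht : 0 ≤ t)
    (hts : t * #s ≤ ∑ i ∈ s, Z i) :
    (∑ i ∈ s, Z i - t * #s) ^ 2 ≤ #{i ∈ s | t ≤ Z i} * ∑ i ∈ s, Z i ^ 2 := by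
  have hsmall : ∑ i ∈ s with ¬t ≤ Z i, Z i ≤ t * #s :=
    calc ∑ i ∈ s with ¬t ≤ Z i, Z i
        ≤ ∑ i ∈ s with ¬t ≤ Z i, t := sum_le_sum fun i hi => (not_le.1 (mem_filter.1 hi).2).le
      _ ≤ t * #s := by
        rw [sum_const, nsmul_eq_mul, mul_comm]
        gcongr
        exact filter_subset _ s
  have hlarge : ∑ i ∈ s, Z i - t * #s ≤ ∑ i ∈ s with t ≤ Z i, Z i := by
    rw [← sum_filter_add_sum_filter_not s (t ≤ Z ·)]
    linarith
  calc (∑ i ∈ s, Z i - t * #s) ^ 2 ≤ (∑ i ∈ s with t ≤ Z i, Z i) ^ 2 := by gcongr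
    _ ≤ #{i ∈ s | t ≤ Z i} * ∑ i ∈ s with t ≤ Z i, Z i ^ 2 := sq_sum_le_card_mul_sum_sq
    _ ≤ #{i ∈ s | t ≤ Z i} * ∑ i ∈ s, Z i ^ 2 := by
        gcongr
        exact filter_subset _ s

lemma card_le_four_mul_card_filter_half_le {Ω : Type*} [Fintype Ω] [Nonempty Ω] (Z : Ω → ℝ)
    {m K : ℝ} (hm : 0 < m) (hmean : ∑ ω, Z ω = Fintype.card Ω * m)
    (hsq : ∑ ω, Z ω ^ 2 ≤ K * (Fintype.card Ω * m ^ 2)) :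
    (Fintype.card Ω : ℝ) ≤ 4 * K * #{ω | m / 2 ≤ Z ω} := by
  have hPZ := paley_zygmund_finset univ Z (t := m / 2) (by positivity)
    (by rw [hmean, card_univ]; nlinarith [Fintype.card_pos (α := Ω)])
  rw [hmean, card_univ] at hPZ
  have hkey : (Fintype.card Ω * m ^ 2) * Fintype.card Ω
      ≤ (Fintype.card Ω * m ^ 2) * (4 * K * #{ω | m / 2 ≤ Z ω}) := by
    nlinarith
  exact le_of_mul_le_mul_left hkey (by positivity)

lemma card_le_twelve_mul_card_filter_gapSum_sq {ι : Type*} [Fintype ι] [LinearOrder ι]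
    (c : (ι → ZMod 2) → ZMod 2) :
    (Fintype.card (({p : ι × ι // p.1 < p.2} → ZMod 2) × (ι → ZMod 2)) : ℝ)
      ≤ 12 * #{ω | 2 ^ Fintype.card ι / 2 ≤ gapSum c pairProducts ω ^ 2} := by
  refine (card_le_four_mul_card_filter_half_le _ (K := 3) (by positivity)
    (sum_gapSum_sq c _) ?_).trans_eq (by ring)
  calc ∑ ω, (gapSum c pairProducts ω ^ 2) ^ 2 = ∑ ω, gapSum c pairProducts ω ^ 4 := by
        simp only [← pow_mul]
    _ ≤ _ := sum_gapSum_pow_le c pairProducts 4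
    _ ≤ _ := by
        rw [mul_left_comm]
        gcongr
        exact_mod_cast card_filter_sum_pairProducts_eq_zero_le

theorem ngap_anticoncentration_general (n : ℕ)
    (α : {t : Fin n × Fin n × Fin n // t.1 < t.2.1 ∧ t.2.1 < t.2.2} → ZMod 2) :
    (1 : ℝ) / 12 ≤
      (((univ : Finset (({p : Fin n × Fin n // p.1 < p.2} → ZMod 2)
            × (Fin n → ZMod 2))).filter (fun bg =>
          (2 : ℝ) ^ (-(n : ℤ) - 1) ≤
            ((1 / 2 ^ n : ℝ) * ∑ x : Fin n → ZMod 2,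
              (if (∑ t : {t : Fin n × Fin n × Fin n // t.1 < t.2.1 ∧ t.2.1 < t.2.2},
                      α t * x t.1.1 * x t.1.2.1 * x t.1.2.2)
                  + (∑ p : {p : Fin n × Fin n // p.1 < p.2},
                      bg.1 p * x p.1.1 * x p.1.2)
                  + (∑ i : Fin n, bg.2 i * x i) = 0 then (1 : ℝ) else -1)) ^ 2)).card : ℝ)
        / (Fintype.card (({p : Fin n × Fin n // p.1 < p.2} → ZMod 2)
            × (Fin n → ZMod 2)) : ℝ) := by
  set c : (Fin n → ZMod 2) → ZMod 2 := fun x =>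
    ∑ t : {t : Fin n × Fin n × Fin n // t.1 < t.2.1 ∧ t.2.1 < t.2.2},
      α t * x t.1.1 * x t.1.2.1 * x t.1.2.2
  have hgap : ∀ bg, (∑ x : Fin n → ZMod 2,
      if (∑ t : {t : Fin n × Fin n × Fin n // t.1 < t.2.1 ∧ t.2.1 < t.2.2},
          α t * x t.1.1 * x t.1.2.1 * x t.1.2.2)
        + (∑ p : {p : Fin n × Fin n // p.1 < p.2}, bg.1 p * x p.1.1 * x p.1.2)
        + (∑ i : Fin n, bg.2 i * x i) = 0 then (1 : ℝ) else -1)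
      = gapSum c pairProducts bg := fun bg => by
    simp only [gapSum, c, dotProduct, pairProducts, mul_assoc, signChar, AddChar.coe_mk]
  have hthreshold (s : ℝ) :
      (2 : ℝ) ^ (-(n : ℤ) - 1) ≤ (1 / 2 ^ n * s) ^ 2 ↔ 2 ^ n / 2 ≤ s ^ 2 := by
    have h2n : (2 : ℝ) ^ (-(n : ℤ) - 1) = 2 ^ n / 2 / (2 ^ n) ^ 2 := by
      rw [zpow_sub₀ two_ne_zero, zpow_neg, zpow_natCast, zpow_one]
      field_simp
    rw [h2n, mul_pow, one_div_pow, one_div_mul_eq_div,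
      div_le_div_iff_of_pos_right (by positivity)]
  simp only [hgap, hthreshold]
  rw [le_div_iff₀ (by exact_mod_cast Fintype.card_pos)]
  have hbound := card_le_twelve_mul_card_filter_gapSum_sq c
  rw [Fintype.card_fin] at hbound
  linarith

/-- Anticoncentration of the gap of a random degree-3 polynomial over `F₂`:
with arbitrary fixed cubic part and uniformly random degree `≤ 2` part,
`Pr[ngap(f)² ≥ 2^{-n-1}] ≥ 1/12`. -/
theorem ngap_anticoncentration (n : ℕ) (hn : 0 < n)
    (α : {t : Fin n × Fin n × Fin n // t.1 < t.2.1 ∧ t.2.1 < t.2.2} → ZMod 2) :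
    (1 : ℝ) / 12 ≤
      (((univ : Finset (({p : Fin n × Fin n // p.1 < p.2} → ZMod 2)
            × (Fin n → ZMod 2))).filter (fun bg =>
          (2 : ℝ) ^ (-(n : ℤ) - 1) ≤
            ((1 / 2 ^ n : ℝ) * ∑ x : Fin n → ZMod 2,
              (if (∑ t : {t : Fin n × Fin n × Fin n // t.1 < t.2.1 ∧ t.2.1 < t.2.2},
                      α t * x t.1.1 * x t.1.2.1 * x t.1.2.2)
                  + (∑ p : {p : Fin n × Fin n // p.1 < p.2},
                      bg.1 p * x p.1.1 * x p.1.2)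
                  + (∑ i : Fin n, bg.2 i * x i) = 0 then (1 : ℝ) else -1)) ^ 2)).card : ℝ)
        / (Fintype.card (({p : Fin n × Fin n // p.1 < p.2} → ZMod 2)
            × (Fin n → ZMod 2)) : ℝ) :=
  ngap_anticoncentration_general n α
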